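/- (Outer MM monotonicity, PSD case.) Let C ∈ ℝ^{n×m}, S ∈ ℝ^{n×m}, let Q ∈ ℝ^{n×m} have strictly positive entries, let α ∈ ℝ^n, β ∈ ℝ^m have strictly positive entries, let λ₂ > 0, τ ≥ 0, and ρ ∈ [0,1]. Let C^x ∈ ℝ^{n×n} and C^y ∈ ℝ^{m×m} be symmetric positive semidefinite, set F(T) = ⟨C^x T C^y, T⟩ and L = 2‖C^x‖₂‖C^y‖₂, and define the full objective J(T) = (1−ρ)⟨C, T⟩ + ρ F(T) − ⟨S, T⟩ + λ₂ KL(T‖Q) + τ (KL(T𝟙_m‖α) + KL(T^⊤𝟙_n‖β)) on the set 𝒩 of entrywise nonnegative n×m matrices. Fix T₀ ∈ 𝒩 and define the surrogate g(T) = (1−ρ)⟨C, T⟩ + ρ (F(T₀) + ⟨2 C^x T₀ C^y, T − T₀⟩ + (L/2)‖T − T₀‖_F²) − ⟨S, T⟩ + λ₂ KL(T‖Q) + τ (KL(T𝟙_m‖α) + KL(T^⊤𝟙_n‖β)). If T₁ ∈ 𝒩 satisfies g(T₁) ≤ g(T) for all T ∈ 𝒩, then J(T₁) ≤ J(T₀).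 -/
import Mathlib


open scoped BigOperators
open Matrix

noncomputable section

/-- Frobenius inner product of two real `n × m` matrices. -/
def finner {n m : ℕ} (A B : Matrix (Fin n) (Fin m) ℝ) : ℝ :=
  ∑ i, ∑ j, A i j * B i j

/-- Frobenius norm. -/
def frobNorm {n m : ℕ} (A : Matrix (Fin n) (Fin m) ℝ) : ℝ :=
  Real.sqrt (finner A A)

/-- Operator (spectral) norm of a real matrix, as a linear map between
Euclidean spaces. -/
def l2OpNorm {k l : ℕ} (M : Matrix (Fin k) (Fin l) ℝ) : ℝ :=
  ‖(Matrix.toEuclideanLin M).toContinuousLinearMap‖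

/-- Generalized KL divergence between matrices (convention `0 log 0 = 0`). -/
def klMat {n m : ℕ} (T Q : Matrix (Fin n) (Fin m) ℝ) : ℝ :=
  ∑ i, ∑ j, (T i j * Real.log (T i j / Q i j) - T i j + Q i j)

/-- Generalized KL divergence between vectors. -/
def klVec {k : ℕ} (r a : Fin k → ℝ) : ℝ :=
  ∑ i, (r i * Real.log (r i / a i) - r i + a i)

/-- Vector of row sums `T𝟙_m`. -/
def rowSums {n m : ℕ} (T : Matrix (Fin n) (Fin m) ℝ) : Fin n → ℝ :=
  fun i => ∑ j, T i j

/-- Vector of column sums `Tᵀ𝟙_n`. -/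
def colSums {n m : ℕ} (T : Matrix (Fin n) (Fin m) ℝ) : Fin m → ℝ :=
  fun j => ∑ i, T i j

lemma finner_comm {n m : ℕ} (A B : Matrix (Fin n) (Fin m) ℝ) : finner A B = finner B A := by
  simp [finner, mul_comm]

lemma finner_self_nonneg {n m : ℕ} (A : Matrix (Fin n) (Fin m) ℝ) : 0 ≤ finner A A := by
  apply Finset.sum_nonneg; intro i _; apply Finset.sum_nonneg; intro j _
  exact mul_self_nonneg _

lemma frobNorm_sq {n m : ℕ} (A : Matrix (Fin n) (Fin m) ℝ) : frobNorm A ^ 2 = finner A A :=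
  Real.sq_sqrt (finner_self_nonneg A)

lemma finner_transpose {n m : ℕ} (A B : Matrix (Fin n) (Fin m) ℝ) :
    finner Aᵀ Bᵀ = finner A B := by
  rw [finner, finner]
  rw [Finset.sum_comm]
  rfl

lemma finner_eq_trace {n m : ℕ} (A B : Matrix (Fin n) (Fin m) ℝ) :
    finner A B = Matrix.trace (Aᵀ * B) := by
  rw [finner, Finset.sum_comm]
  simp [Matrix.trace, Matrix.diag, Matrix.mul_apply]

lemma finner_add_left {n m : ℕ} (A B X : Matrix (Fin n) (Fin m) ℝ) :
    finner (A + B) X = finner A X + finner B X := by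
  simp [finner, add_mul, Finset.sum_add_distrib]

lemma finner_smul_left {n m : ℕ} (c : ℝ) (A X : Matrix (Fin n) (Fin m) ℝ) :
    finner (c • A) X = c * finner A X := by
  simp [finner, Finset.mul_sum, mul_assoc]

lemma finner_two_smul {n m : ℕ} (A X : Matrix (Fin n) (Fin m) ℝ) :
    finner ((2:ℕ) • A) X = 2 * finner A X := by
  have h : (2:ℕ) • A = (2:ℝ) • A := by
    ext i j; simp [two_smul]; ring
  rw [h, finner_smul_left]

lemma finner_cs {n m : ℕ} (A B : Matrix (Fin n) (Fin m) ℝ) :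
    finner A B ≤ Real.sqrt (finner A A) * Real.sqrt (finner B B) := by
  have hA : finner A B = ∑ p : Fin n × Fin m, A p.1 p.2 * B p.1 p.2 := by
    rw [finner, Fintype.sum_prod_type]
  have key : (∑ p : Fin n × Fin m, A p.1 p.2 * B p.1 p.2)^2
      ≤ (∑ p : Fin n × Fin m, A p.1 p.2 ^2) * (∑ p : Fin n × Fin m, B p.1 p.2 ^2) := by
    exact Finset.sum_mul_sq_le_sq_mul_sq Finset.univ _ _
  have hAA : finner A A = ∑ p : Fin n × Fin m, A p.1 p.2 ^2 := by
    rw [finner, Fintype.sum_prod_type]; simp [sq]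
  have hBB : finner B B = ∑ p : Fin n × Fin m, B p.1 p.2 ^2 := by
    rw [finner, Fintype.sum_prod_type]; simp [sq]
  calc finner A B ≤ |finner A B| := le_abs_self _
    _ = Real.sqrt ((finner A B)^2) := (Real.sqrt_sq_eq_abs _).symm
    _ ≤ Real.sqrt (finner A A * finner B B) := by
        apply Real.sqrt_le_sqrt; rw [hA, hAA, hBB]; exact key
    _ = Real.sqrt (finner A A) * Real.sqrt (finner B B) := Real.sqrt_mul (finner_self_nonneg A) _

section opHelpers
open scoped Matrix.Norms.L2Operator

lemma l2OpNorm_eq {k l : ℕ} (M : Matrix (Fin k) (Fin l) ℝ) : l2OpNorm M = ‖M‖ := rfl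

lemma l2OpNorm_nonneg {k l : ℕ} (M : Matrix (Fin k) (Fin l) ℝ) : 0 ≤ l2OpNorm M := by
  rw [l2OpNorm_eq]; exact norm_nonneg _

lemma mulVec_sq_le {k l : ℕ} (M : Matrix (Fin k) (Fin l) ℝ) (x : Fin l → ℝ) :
    ∑ i, (M.mulVec x i)^2 ≤ (l2OpNorm M)^2 * ∑ i, x i ^2 := by
  have h := M.l2_opNorm_mulVec ((WithLp.equiv 2 (Fin l → ℝ)).symm x)
  have h1 : ‖(EuclideanSpace.equiv (Fin k) ℝ).symm (M *ᵥ x)‖^2 = ∑ i, (M.mulVec x i)^2 := by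
    rw [EuclideanSpace.norm_eq, Real.sq_sqrt (by positivity)]
    simp [sq_abs]
  have h2 : ‖(WithLp.equiv 2 (Fin l → ℝ)).symm x‖^2 = ∑ i, x i ^2 := by
    rw [EuclideanSpace.norm_eq, Real.sq_sqrt (by positivity)]
    simp [sq_abs]
  have h' : ‖(EuclideanSpace.equiv (Fin k) ℝ).symm (M *ᵥ x)‖^2
      ≤ (‖M‖ * ‖(WithLp.equiv 2 (Fin l → ℝ)).symm x‖)^2 := pow_le_pow_left₀ (norm_nonneg _) h 2
  rw [h1] at h'
  calc ∑ i, (M.mulVec x i)^2 ≤ (‖M‖ * ‖(WithLp.equiv 2 (Fin l → ℝ)).symm x‖)^2 := h'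
    _ = (l2OpNorm M)^2 * ∑ i, x i ^2 := by rw [mul_pow, h2, l2OpNorm_eq]

end opHelpers

lemma finner_mul_left_le {k n m : ℕ} (M : Matrix (Fin k) (Fin n) ℝ)
    (X : Matrix (Fin n) (Fin m) ℝ) :
    finner (M * X) (M * X) ≤ (l2OpNorm M)^2 * finner X X := by
  have hswap : finner (M * X) (M * X) = ∑ j, ∑ i, ((M * X) i j)^2 := by
    rw [finner, Finset.sum_comm]; simp [sq]
  have hX : finner X X = ∑ j, ∑ i, (X i j)^2 := by
    rw [finner, Finset.sum_comm]; simp [sq]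
  rw [hswap, hX, Finset.mul_sum]
  apply Finset.sum_le_sum
  intro j _
  have hcol : ∀ i, (M * X) i j = M.mulVec (fun l => X l j) i := by
    intro i; simp [Matrix.mul_apply, Matrix.mulVec, dotProduct]
  calc ∑ i, ((M * X) i j)^2 = ∑ i, (M.mulVec (fun l => X l j) i)^2 := by
        apply Finset.sum_congr rfl; intro i _; rw [hcol]
    _ ≤ (l2OpNorm M)^2 * ∑ l, (X l j)^2 := mulVec_sq_le M _

lemma finner_mul_right_le {n m : ℕ} (X : Matrix (Fin n) (Fin m) ℝ)
    (Nmat : Matrix (Fin m) (Fin m) ℝ) (hN : Nmatᵀ = Nmat) :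
    finner (X * Nmat) (X * Nmat) ≤ (l2OpNorm Nmat)^2 * finner X X := by
  have h1 : finner (X * Nmat) (X * Nmat) = finner (Nmat * Xᵀ) (Nmat * Xᵀ) := by
    rw [← finner_transpose (X * Nmat) (X * Nmat), Matrix.transpose_mul, hN]
  rw [h1, ← finner_transpose X X]
  exact finner_mul_left_le Nmat Xᵀ

lemma key_bound {n m : ℕ} (Cx : Matrix (Fin n) (Fin n) ℝ) (Cy : Matrix (Fin m) (Fin m) ℝ)
    (hCy : Cyᵀ = Cy) (D : Matrix (Fin n) (Fin m) ℝ) :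
    finner (Cx * D * Cy) D ≤ (l2OpNorm Cx * l2OpNorm Cy) * finner D D := by
  have hAA : finner (Cx * D * Cy) (Cx * D * Cy)
      ≤ (l2OpNorm Cx)^2 * (l2OpNorm Cy)^2 * finner D D := by
    calc finner (Cx * D * Cy) (Cx * D * Cy)
        ≤ (l2OpNorm Cy)^2 * finner (Cx * D) (Cx * D) :=
          finner_mul_right_le (Cx * D) Cy hCy
      _ ≤ (l2OpNorm Cy)^2 * ((l2OpNorm Cx)^2 * finner D D) := by
          apply mul_le_mul_of_nonneg_left (finner_mul_left_le Cx D) (by positivity)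
      _ = (l2OpNorm Cx)^2 * (l2OpNorm Cy)^2 * finner D D := by ring
  calc finner (Cx * D * Cy) D
      ≤ Real.sqrt (finner (Cx * D * Cy) (Cx * D * Cy)) * Real.sqrt (finner D D) :=
        finner_cs _ _
    _ ≤ Real.sqrt ((l2OpNorm Cx)^2 * (l2OpNorm Cy)^2 * finner D D) * Real.sqrt (finner D D) := by
        apply mul_le_mul_of_nonneg_right (Real.sqrt_le_sqrt hAA) (Real.sqrt_nonneg _)
    _ = (l2OpNorm Cx * l2OpNorm Cy) * (Real.sqrt (finner D D) * Real.sqrt (finner D D)) := by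
        rw [show (l2OpNorm Cx)^2 * (l2OpNorm Cy)^2 * finner D D
            = ((l2OpNorm Cx * l2OpNorm Cy))^2 * finner D D by ring,
          Real.sqrt_mul (sq_nonneg _), Real.sqrt_sq (mul_nonneg (l2OpNorm_nonneg _) (l2OpNorm_nonneg _))]
        ring
    _ = (l2OpNorm Cx * l2OpNorm Cy) * finner D D := by
        rw [Real.mul_self_sqrt (finner_self_nonneg D)]

lemma finner_sandwich_symm {n m : ℕ} (Cx : Matrix (Fin n) (Fin n) ℝ)
    (Cy : Matrix (Fin m) (Fin m) ℝ) (hCx : Cxᵀ = Cx) (hCy : Cyᵀ = Cy)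
    (A B : Matrix (Fin n) (Fin m) ℝ) :
    finner (Cx * A * Cy) B = finner (Cx * B * Cy) A := by
  rw [finner_eq_trace, finner_comm (Cx * B * Cy) A, finner_eq_trace]
  rw [Matrix.transpose_mul, Matrix.transpose_mul, hCx, hCy]
  calc Matrix.trace (Cy * (Aᵀ * Cx) * B) = Matrix.trace (Cy * (Aᵀ * Cx * B)) := by
        rw [Matrix.mul_assoc]
    _ = Matrix.trace ((Aᵀ * Cx * B) * Cy) := Matrix.trace_mul_comm _ _
    _ = Matrix.trace (Aᵀ * (Cx * B * Cy)) := by simp [Matrix.mul_assoc]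

lemma finner_add_right {n m : ℕ} (X A B : Matrix (Fin n) (Fin m) ℝ) :
    finner X (A + B) = finner X A + finner X B := by
  rw [finner_comm, finner_add_left, finner_comm A X, finner_comm B X]

/-- Outer MM monotonicity, PSD case: if `T₁` minimizes the quadratic
surrogate `g` (built from the linearization of the fused term `F` at `T₀` with
constant `L = 2‖Cˣ‖₂‖Cʸ‖₂`) over the nonnegative orthant `𝒩`, then the true
objective `J` does not increase: `J(T₁) ≤ J(T₀)`. -/
theorem stmt16 {n m : ℕ} (C S : Matrix (Fin n) (Fin m) ℝ)
    (Q : Matrix (Fin n) (Fin m) ℝ) (hQ : ∀ i j, 0 < Q i j)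
    (α : Fin n → ℝ) (β : Fin m → ℝ) (hα : ∀ i, 0 < α i) (hβ : ∀ j, 0 < β j)
    (lam2 τ ρ : ℝ) (hlam2 : 0 < lam2) (hτ : 0 ≤ τ) (hρ0 : 0 ≤ ρ) (hρ1 : ρ ≤ 1)
    (Cx : Matrix (Fin n) (Fin n) ℝ) (Cy : Matrix (Fin m) (Fin m) ℝ)
    (hCx : Cx.PosSemidef) (hCy : Cy.PosSemidef)
    (F : Matrix (Fin n) (Fin m) ℝ → ℝ) (hF : ∀ T, F T = finner (Cx * T * Cy) T)
    (L : ℝ) (hL : L = 2 * l2OpNorm Cx * l2OpNorm Cy)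
    (N : Set (Matrix (Fin n) (Fin m) ℝ))
    (hN : N = {T : Matrix (Fin n) (Fin m) ℝ | ∀ i j, 0 ≤ T i j})
    (J : Matrix (Fin n) (Fin m) ℝ → ℝ)
    (hJ : ∀ T, J T = (1 - ρ) * finner C T + ρ * F T - finner S T + lam2 * klMat T Q
        + τ * (klVec (rowSums T) α + klVec (colSums T) β))
    (T₀ : Matrix (Fin n) (Fin m) ℝ) (hT₀ : T₀ ∈ N)
    (g : Matrix (Fin n) (Fin m) ℝ → ℝ)
    (hg : ∀ T, g T = (1 - ρ) * finner C T
        + ρ * (F T₀ + finner (2 • (Cx * T₀ * Cy)) (T - T₀) + (L / 2) * frobNorm (T - T₀) ^ 2)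
        - finner S T + lam2 * klMat T Q
        + τ * (klVec (rowSums T) α + klVec (colSums T) β))
    (T₁ : Matrix (Fin n) (Fin m) ℝ) (hT₁ : T₁ ∈ N)
    (hmin : ∀ T ∈ N, g T₁ ≤ g T) :
    J T₁ ≤ J T₀ := by
  have hCxs : Cxᵀ = Cx := by
    ext i j
    have := congrFun (congrFun hCx.1 i) j
    simpa using this
  have hCys : Cyᵀ = Cy := by
    ext i j
    have := congrFun (congrFun hCy.1 i) j
    simpa using this
  have hexp : ∀ T : Matrix (Fin n) (Fin m) ℝ,
      F T = F T₀ + finner (2 • (Cx * T₀ * Cy)) (T - T₀)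
        + finner (Cx * (T - T₀) * Cy) (T - T₀) := by
    intro T
    set D := T - T₀ with hD
    have hT : T = T₀ + D := by rw [hD]; abel
    rw [hF, hF, hT]
    have hmul : Cx * (T₀ + D) * Cy = Cx * T₀ * Cy + Cx * D * Cy := by
      rw [Matrix.mul_add, Matrix.add_mul]
    rw [hmul, finner_add_left, finner_add_right, finner_add_right,
      finner_sandwich_symm Cx Cy hCxs hCys D T₀, finner_two_smul]
    ring
  have hle : ∀ T : Matrix (Fin n) (Fin m) ℝ, J T ≤ g T := by
    intro T
    rw [hJ, hg]
    have h1 : ρ * F T ≤ ρ * (F T₀ + finner (2 • (Cx * T₀ * Cy)) (T - T₀)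
        + (L / 2) * frobNorm (T - T₀) ^ 2) := by
      apply mul_le_mul_of_nonneg_left _ hρ0
      rw [hexp T, frobNorm_sq, hL]
      have := key_bound Cx Cy hCys (T - T₀)
      linarith
    linarith
  have heq : g T₀ = J T₀ := by
    rw [hJ, hg]
    simp [sub_self, finner, frobNorm, Real.sqrt_zero]
  calc J T₁ ≤ g T₁ := hle T₁
    _ ≤ g T₀ := hmin T₀ hT₀
    _ = J T₀ := heq
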